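/- For $\phi$ smooth with compact support of type $S(-1)$ with respect to a curvature $-1$ conformal metric, one has the identity $\langle K_0K_{-1}\phi, K_0K_{-1}\phi\rangle = \langle L_0K_{-1}\phi, L_0K_{-1}\phi\rangle$. -/

import Mathlib

open Complex MeasureTheory

/-- Wirtinger derivative `∂/∂z`. -/
noncomputable def dZ (f : ℂ → ℂ) (z : ℂ) : ℂ :=
  (fderiv ℝ f z 1 - Complex.I * fderiv ℝ f z Complex.I) / 2

/-- Wirtinger derivative `∂/∂z̄`. -/
noncomputable def dZbar (f : ℂ → ℂ) (z : ℂ) : ℂ :=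
  (fderiv ℝ f z 1 + Complex.I * fderiv ℝ f z Complex.I) / 2

/-- `K_r f = λ^{r-1} ∂_z (λ^{-r} f)`. -/
noncomputable def Kop (lam : ℂ → ℝ) (r : ℤ) (f : ℂ → ℂ) (z : ℂ) : ℂ :=
  (lam z : ℂ) ^ (r - 1) * dZ (fun w => (lam w : ℂ) ^ (-r) * f w) z

/-- `L_r f = λ^{-r-1} ∂_z̄ (λ^{r} f)`. -/
noncomputable def Lop (lam : ℂ → ℝ) (r : ℤ) (f : ℂ → ℂ) (z : ℂ) : ℂ :=
  (lam z : ℂ) ^ (-r - 1) * dZbar (fun w => (lam w : ℂ) ^ r * f w) z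

/-- Constant curvature `-1`: `4 ∂_z ∂_z̄ log λ = λ²` on `U`. -/
def CurvMinusOne (lam : ℂ → ℝ) (U : Set ℂ) : Prop :=
  ∀ z ∈ U, 4 * dZ (fun w => dZbar (fun u => (Real.log (lam u) : ℂ)) w) z = (lam z : ℂ) ^ 2

section Helpers

local notation "∞" => ((⊤ : ℕ∞) : WithTop ℕ∞)

lemma infty_add_one_le : ∞ + 1 ≤ ∞ := by
  exact_mod_cast le_top

lemma fderiv_eq_zero_of_not_mem_tsupport {f : ℂ → ℂ} {z : ℂ} (h : z ∉ tsupport f) :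
    fderiv ℝ f z = 0 := by
  have h0 : f =ᶠ[nhds z] 0 := by
    filter_upwards [(isClosed_tsupport f).isOpen_compl.mem_nhds h] with w hw
    exact image_eq_zero_of_notMem_tsupport hw
  rw [h0.fderiv_eq]
  exact fderiv_const_apply 0

lemma dZ_eq_zero_of_not_mem_tsupport {f : ℂ → ℂ} {z : ℂ} (h : z ∉ tsupport f) :
    dZ f z = 0 := by
  simp [dZ, fderiv_eq_zero_of_not_mem_tsupport h]

lemma dZbar_eq_zero_of_not_mem_tsupport {f : ℂ → ℂ} {z : ℂ} (h : z ∉ tsupport f) :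
    dZbar f z = 0 := by
  simp [dZbar, fderiv_eq_zero_of_not_mem_tsupport h]

lemma contDiff_fderiv_apply {f : ℂ → ℂ} (hf : ContDiff ℝ ∞ f) (v : ℂ) :
    ContDiff ℝ ∞ (fun z => fderiv ℝ f z v) :=
  (hf.fderiv_right infty_add_one_le).clm_apply contDiff_const

lemma contDiff_dZ {f : ℂ → ℂ} (hf : ContDiff ℝ ∞ f) : ContDiff ℝ ∞ (dZ f) := by
  unfold dZ
  exact (((contDiff_fderiv_apply hf 1).sub
    (contDiff_const.mul (contDiff_fderiv_apply hf Complex.I)))).div_const 2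

lemma contDiff_dZbar {f : ℂ → ℂ} (hf : ContDiff ℝ ∞ f) : ContDiff ℝ ∞ (dZbar f) := by
  unfold dZbar
  exact (((contDiff_fderiv_apply hf 1).add
    (contDiff_const.mul (contDiff_fderiv_apply hf Complex.I)))).div_const 2

lemma contDiffOn_fderiv_apply {f : ℂ → ℂ} {U : Set ℂ} (hU : IsOpen U)
    (hf : ContDiffOn ℝ ∞ f U) (v : ℂ) :
    ContDiffOn ℝ ∞ (fun z => fderiv ℝ f z v) U :=
  (hf.fderiv_of_isOpen hU infty_add_one_le).clm_apply contDiffOn_const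

lemma contDiffOn_dZ {f : ℂ → ℂ} {U : Set ℂ} (hU : IsOpen U)
    (hf : ContDiffOn ℝ ∞ f U) : ContDiffOn ℝ ∞ (dZ f) U := by
  unfold dZ
  exact (((contDiffOn_fderiv_apply hU hf 1).sub
    (contDiffOn_const.mul (contDiffOn_fderiv_apply hU hf Complex.I)))).div_const 2

lemma contDiffOn_dZbar {f : ℂ → ℂ} {U : Set ℂ} (hU : IsOpen U)
    (hf : ContDiffOn ℝ ∞ f U) : ContDiffOn ℝ ∞ (dZbar f) U := by
  unfold dZbar
  exact (((contDiffOn_fderiv_apply hU hf 1).add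
    (contDiffOn_const.mul (contDiffOn_fderiv_apply hU hf Complex.I)))).div_const 2

lemma contDiffOn_zpow_comp {U : Set ℂ} {lam : ℂ → ℝ} (hU : IsOpen U)
    (hlam : ContDiffOn ℝ ∞ lam U) (hpos : ∀ z ∈ U, 0 < lam z) (n : ℤ) :
    ContDiffOn ℝ ∞ (fun z => (lam z : ℂ) ^ n) U := by
  have hc : ContDiffOn ℝ ∞ (fun z => (lam z : ℂ)) U :=
    Complex.ofRealCLM.contDiff.comp_contDiffOn hlam
  rcases n with m | m
  · simpa using hc.pow m
  · have h : (fun z => (lam z : ℂ) ^ (Int.negSucc m)) = fun z => ((lam z : ℂ) ^ (m + 1))⁻¹ := by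
      funext z; rw [zpow_negSucc]
    rw [h]
    exact (hc.pow (m + 1)).inv fun z hz =>
      pow_ne_zero _ (by exact_mod_cast (hpos z hz).ne')

/-- integral of a line derivative of a smooth compactly supported real function vanishes -/
lemma integral_fderiv_real {g : ℂ → ℝ} (hg : ContDiff ℝ ∞ g) (hs : HasCompactSupport g)
    (v : ℂ) : ∫ z : ℂ, fderiv ℝ g z v = 0 := by
  obtain ⟨C, hC⟩ := hg.lipschitzWith_of_hasCompactSupport hs (by norm_cast)
  have key := LipschitzWith.integral_lineDeriv_mul_eq (μ := volume)
    (LipschitzWith.const (1 : ℝ)) hC hs v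
  have h1 : ∀ x : ℂ, lineDeriv ℝ (fun _ : ℂ => (1:ℝ)) x v = 0 := fun x => by
    rw [(differentiableAt_const (1:ℝ)).lineDeriv_eq_fderiv, fderiv_const_apply]; rfl
  have h2 : ∀ x : ℂ, lineDeriv ℝ g x (-v) = -(fderiv ℝ g x v) := fun x => by
    rw [lineDeriv_neg, (hg.differentiable (by norm_cast) x).lineDeriv_eq_fderiv]
  simp only [h1, h2, zero_mul, mul_one, integral_zero, integral_neg] at key
  linarith [key]

lemma integral_fderiv_complex {A : ℂ → ℂ} (hA : ContDiff ℝ ∞ A) (hs : HasCompactSupport A)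
    (v : ℂ) : ∫ z : ℂ, fderiv ℝ A z v = 0 := by
  have hdiff : Differentiable ℝ A := hA.differentiable (by norm_cast)
  have hint : Integrable (fun z : ℂ => fderiv ℝ A z v) := by
    apply Continuous.integrable_of_hasCompactSupport
    · exact (contDiff_fderiv_apply hA v).continuous
    · apply HasCompactSupport.intro hs
      intro z hz
      rw [fderiv_eq_zero_of_not_mem_tsupport hz]; rfl
  have hre : ∀ z : ℂ, (fderiv ℝ A z v).re = fderiv ℝ (fun w => (A w).re) z v := by
    intro z
    have h := (Complex.reCLM.hasFDerivAt.comp z (hdiff z).hasFDerivAt).fderiv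
    calc (fderiv ℝ A z v).re = (Complex.reCLM.comp (fderiv ℝ A z)) v := rfl
      _ = fderiv ℝ (fun w => (A w).re) z v := by rw [← h]; rfl
  have him : ∀ z : ℂ, (fderiv ℝ A z v).im = fderiv ℝ (fun w => (A w).im) z v := by
    intro z
    have h := (Complex.imCLM.hasFDerivAt.comp z (hdiff z).hasFDerivAt).fderiv
    calc (fderiv ℝ A z v).im = (Complex.imCLM.comp (fderiv ℝ A z)) v := rfl
      _ = fderiv ℝ (fun w => (A w).im) z v := by rw [← h]; rfl
  have hAre : ContDiff ℝ ∞ (fun w => (A w).re) := Complex.reCLM.contDiff.comp hA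
  have hAim : ContDiff ℝ ∞ (fun w => (A w).im) := Complex.imCLM.contDiff.comp hA
  have hsre : HasCompactSupport (fun w => (A w).re) := hs.comp_left (g := Complex.re) rfl
  have hsim : HasCompactSupport (fun w => (A w).im) := hs.comp_left (g := Complex.im) rfl
  apply Complex.ext
  · rw [← RCLike.re_eq_complex_re, ← integral_re hint]
    simp only [RCLike.re_eq_complex_re, hre]
    exact integral_fderiv_real hAre hsre v
  · rw [← RCLike.im_eq_complex_im, ← integral_im hint]
    simp only [RCLike.im_eq_complex_im, him]
    exact integral_fderiv_real hAim hsim v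

lemma fderiv_apply_integrable {A : ℂ → ℂ} (hA : ContDiff ℝ ∞ A) (hs : HasCompactSupport A)
    (v : ℂ) : Integrable (fun z : ℂ => fderiv ℝ A z v) := by
  apply Continuous.integrable_of_hasCompactSupport
  · exact (contDiff_fderiv_apply hA v).continuous
  · apply HasCompactSupport.intro hs
    intro z hz
    rw [fderiv_eq_zero_of_not_mem_tsupport hz]; rfl

lemma integral_dZ_eq_zero {A : ℂ → ℂ} (hA : ContDiff ℝ ∞ A) (hs : HasCompactSupport A) :
    ∫ z : ℂ, dZ A z = 0 := by
  unfold dZ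
  rw [integral_div, integral_sub (fderiv_apply_integrable hA hs 1)
    (((fderiv_apply_integrable hA hs Complex.I)).const_mul Complex.I),
    integral_const_mul, integral_fderiv_complex hA hs, integral_fderiv_complex hA hs]
  simp

lemma integral_dZbar_eq_zero {A : ℂ → ℂ} (hA : ContDiff ℝ ∞ A) (hs : HasCompactSupport A) :
    ∫ z : ℂ, dZbar A z = 0 := by
  unfold dZbar
  rw [integral_div, integral_add (fderiv_apply_integrable hA hs 1)
    (((fderiv_apply_integrable hA hs Complex.I)).const_mul Complex.I),
    integral_const_mul, integral_fderiv_complex hA hs, integral_fderiv_complex hA hs]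
  simp

lemma dZ_mul {f g : ℂ → ℂ} {z : ℂ} (hf : DifferentiableAt ℝ f z)
    (hg : DifferentiableAt ℝ g z) :
    dZ (fun w => f w * g w) z = dZ f z * g z + f z * dZ g z := by
  unfold dZ
  rw [fderiv_fun_mul hf hg]
  simp only [ContinuousLinearMap.add_apply, ContinuousLinearMap.smul_apply, smul_eq_mul]
  ring

lemma dZbar_mul {f g : ℂ → ℂ} {z : ℂ} (hf : DifferentiableAt ℝ f z)
    (hg : DifferentiableAt ℝ g z) :
    dZbar (fun w => f w * g w) z = dZbar f z * g z + f z * dZbar g z := by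
  unfold dZbar
  rw [fderiv_fun_mul hf hg]
  simp only [ContinuousLinearMap.add_apply, ContinuousLinearMap.smul_apply, smul_eq_mul]
  ring

lemma fderiv_fderiv_apply {f : ℂ → ℂ} (hf : ContDiff ℝ ∞ f) (z u v : ℂ) :
    fderiv ℝ (fun w => fderiv ℝ f w v) z u = fderiv ℝ (fderiv ℝ f) z u v := by
  have h1 : DifferentiableAt ℝ (fderiv ℝ f) z :=
    (hf.fderiv_right infty_add_one_le).differentiable (by norm_cast) z
  have h := ((ContinuousLinearMap.apply ℝ ℂ v).hasFDerivAt.comp z h1.hasFDerivAt).fderiv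
  calc fderiv ℝ (fun w => fderiv ℝ f w v) z u
      = fderiv ℝ ((ContinuousLinearMap.apply ℝ ℂ v) ∘ (fderiv ℝ f)) z u := rfl
    _ = ((ContinuousLinearMap.apply ℝ ℂ v).comp (fderiv ℝ (fderiv ℝ f) z)) u := by rw [h]
    _ = fderiv ℝ (fderiv ℝ f) z u v := rfl

lemma differentiableAt_fderiv_apply {f : ℂ → ℂ} (hf : ContDiff ℝ ∞ f) (z v : ℂ) :
    DifferentiableAt ℝ (fun w => fderiv ℝ f w v) z :=
  ((hf.fderiv_right infty_add_one_le).differentiable (by norm_cast) z).clm_apply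
    (differentiableAt_const v)

lemma fderiv_dZbar_apply {f : ℂ → ℂ} (hf : ContDiff ℝ ∞ f) (z u : ℂ) :
    fderiv ℝ (dZbar f) z u
      = (fderiv ℝ (fderiv ℝ f) z u 1 + Complex.I * fderiv ℝ (fderiv ℝ f) z u Complex.I) / 2 := by
  have e1 := (differentiableAt_fderiv_apply hf z 1).hasFDerivAt
  have eI := (differentiableAt_fderiv_apply hf z Complex.I).hasFDerivAt
  have h := (e1.add (eI.const_mul Complex.I)).const_mul ((2:ℂ)⁻¹)
  have h' : HasFDerivAt (dZbar f)
      (((2:ℂ)⁻¹) • (fderiv ℝ (fun w => fderiv ℝ f w 1) z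
        + Complex.I • fderiv ℝ (fun w => fderiv ℝ f w Complex.I) z)) z := by
    apply h.congr_of_eventuallyEq
    apply Filter.Eventually.of_forall
    intro w
    show dZbar f w = (2:ℂ)⁻¹ * (fderiv ℝ f w 1 + Complex.I * fderiv ℝ f w Complex.I)
    rw [dZbar, div_eq_inv_mul]
  rw [h'.fderiv]
  simp only [ContinuousLinearMap.coe_smul', Pi.smul_apply, ContinuousLinearMap.add_apply,
    ContinuousLinearMap.smul_apply, smul_eq_mul, fderiv_fderiv_apply hf]
  ring

lemma fderiv_dZ_apply {f : ℂ → ℂ} (hf : ContDiff ℝ ∞ f) (z u : ℂ) :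
    fderiv ℝ (dZ f) z u
      = (fderiv ℝ (fderiv ℝ f) z u 1 - Complex.I * fderiv ℝ (fderiv ℝ f) z u Complex.I) / 2 := by
  have e1 := (differentiableAt_fderiv_apply hf z 1).hasFDerivAt
  have eI := (differentiableAt_fderiv_apply hf z Complex.I).hasFDerivAt
  have h := (e1.sub (eI.const_mul Complex.I)).const_mul ((2:ℂ)⁻¹)
  have h' : HasFDerivAt (dZ f)
      (((2:ℂ)⁻¹) • (fderiv ℝ (fun w => fderiv ℝ f w 1) z
        - Complex.I • fderiv ℝ (fun w => fderiv ℝ f w Complex.I) z)) z := by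
    apply h.congr_of_eventuallyEq
    apply Filter.Eventually.of_forall
    intro w
    show dZ f w = (2:ℂ)⁻¹ * (fderiv ℝ f w 1 - Complex.I * fderiv ℝ f w Complex.I)
    rw [dZ, div_eq_inv_mul]
  rw [h'.fderiv]
  simp only [ContinuousLinearMap.coe_smul', Pi.smul_apply, ContinuousLinearMap.sub_apply,
    ContinuousLinearMap.smul_apply, smul_eq_mul, fderiv_fderiv_apply hf]
  ring

lemma dZ_dZbar_comm {f : ℂ → ℂ} (hf : ContDiff ℝ ∞ f) (z : ℂ) :
    dZ (dZbar f) z = dZbar (dZ f) z := by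
  have hsym : fderiv ℝ (fderiv ℝ f) z 1 Complex.I = fderiv ℝ (fderiv ℝ f) z Complex.I 1 :=
    (hf.contDiffAt.isSymmSndFDerivAt (by simp; exact WithTop.coe_le_coe.mpr (le_top : (2:ℕ∞) ≤ ⊤))) 1 Complex.I
  show (fderiv ℝ (dZbar f) z 1 - Complex.I * fderiv ℝ (dZbar f) z Complex.I) / 2
      = (fderiv ℝ (dZ f) z 1 + Complex.I * fderiv ℝ (dZ f) z Complex.I) / 2
  rw [fderiv_dZbar_apply hf, fderiv_dZbar_apply hf, fderiv_dZ_apply hf, fderiv_dZ_apply hf,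
    hsym]
  ring

end Helpers

local notation "∞'" => ((⊤ : ℕ∞) : WithTop ℕ∞)

/-- `⟨K₀K₋₁φ, K₀K₋₁φ⟩ = ⟨L₀K₋₁φ, L₀K₋₁φ⟩` for smooth compactly supported
`φ` of type `S(-1)` on a curvature `-1` domain. -/
theorem second_order_identity_K0Km1
    (U : Set ℂ) (hU : IsOpen U)
    (lam : ℂ → ℝ) (hlam : ContDiffOn ℝ (⊤ : ℕ∞) lam U) (hpos : ∀ z ∈ U, 0 < lam z)
    (hcurv : CurvMinusOne lam U)
    (φ : ℂ → ℂ) (hφ : ContDiffOn ℝ (⊤ : ℕ∞) φ U)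
    (hsupp : HasCompactSupport φ) (hsub : tsupport φ ⊆ U) :
    ∫ z in U, ‖Kop lam 0 (Kop lam (-1) φ) z‖ ^ 2 * (lam z) ^ 2 =
      ∫ z in U, ‖Lop lam 0 (Kop lam (-1) φ) z‖ ^ 2 * (lam z) ^ 2 := by
  have hlam' : ContDiffOn ℝ ∞' lam U := hlam.of_le (by simp)
  have hφ' : ContDiffOn ℝ ∞' φ U := hφ.of_le (by simp)
  set F : ℂ → ℂ := Kop lam (-1) φ with hFdef
  set g : ℂ → ℂ := fun w => (lam w : ℂ) ^ (1 : ℤ) * φ w with hgdef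
  have hFeq : ∀ z, F z = (lam z : ℂ) ^ (-2 : ℤ) * dZ g z := by
    intro z
    simp only [hFdef, Kop, hgdef, (by norm_num : (-1:ℤ) - 1 = -2),
      (by norm_num : -(-1:ℤ) = (1:ℤ))]
  have hg : ContDiffOn ℝ ∞' g U := (contDiffOn_zpow_comp hU hlam' hpos 1).mul hφ'
  have hgsup : ∀ z, z ∉ tsupport φ → z ∉ tsupport g := by
    intro z hz hmem
    apply hz
    refine closure_mono ?_ hmem
    intro w hw
    simp only [hgdef, Function.mem_support] at hw ⊢
    intro h0
    exact hw (by rw [h0, mul_zero])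
  have hFtsup : ∀ z, z ∉ tsupport φ → F z = 0 := fun z hz => by
    rw [hFeq z, dZ_eq_zero_of_not_mem_tsupport (hgsup z hz), mul_zero]
  have hFU : ContDiffOn ℝ ∞' F U := by
    refine ContDiffOn.congr ((contDiffOn_zpow_comp hU hlam' hpos (-2)).mul
      (contDiffOn_dZ hU hg)) fun z _ => hFeq z
  have hF : ContDiff ℝ ∞' F := by
    rw [← contDiffOn_univ]
    intro z _
    by_cases hz : z ∈ U
    · exact ((hFU.contDiffAt (hU.mem_nhds hz)).contDiffWithinAt)
    · have hz' : z ∉ tsupport φ := fun h => hz (hsub h)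
      have : F =ᶠ[nhds z] (fun _ => 0) := by
        filter_upwards [(isClosed_tsupport φ).isOpen_compl.mem_nhds hz'] with w hw
        exact hFtsup w hw
      exact ((contDiffAt_const (c := (0:ℂ))).congr_of_eventuallyEq this).contDiffWithinAt
  have hFsupp : HasCompactSupport F := HasCompactSupport.intro hsupp hFtsup
  have htsF : tsupport F ⊆ tsupport φ :=
    closure_minimal (fun z hz => by
      by_contra h
      exact hz (hFtsup z h)) (isClosed_tsupport φ)
  -- reduce the integrands on U
  have hK0 : ∀ z ∈ U, ‖Kop lam 0 F z‖ ^ 2 * (lam z) ^ 2 = ‖dZ F z‖ ^ 2 := by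
    intro z hz
    have hl : lam z ≠ 0 := (hpos z hz).ne'
    have h1 : Kop lam 0 F z = (lam z : ℂ) ^ (-1 : ℤ) * dZ F z := by
      simp only [Kop, neg_zero, zpow_zero, one_mul, zero_sub]
    rw [h1, norm_mul, mul_pow, norm_zpow, Complex.norm_real, Real.norm_eq_abs,
      abs_of_pos (hpos z hz), zpow_neg_one]
    field_simp
  have hL0 : ∀ z ∈ U, ‖Lop lam 0 F z‖ ^ 2 * (lam z) ^ 2 = ‖dZbar F z‖ ^ 2 := by
    intro z hz
    have hl : lam z ≠ 0 := (hpos z hz).ne'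
    have h1 : Lop lam 0 F z = (lam z : ℂ) ^ (-1 : ℤ) * dZbar F z := by
      simp only [Lop, zpow_zero, one_mul, neg_zero, zero_sub]
    rw [h1, norm_mul, mul_pow, norm_zpow, Complex.norm_real, Real.norm_eq_abs,
      abs_of_pos (hpos z hz), zpow_neg_one]
    field_simp
  -- conjugate function
  set Fc : ℂ → ℂ := fun z => (starRingEnd ℂ) (F z) with hFcdef
  have hFc : ContDiff ℝ ∞' Fc :=
    (Complex.conjCLE : ℂ ≃L[ℝ] ℂ).toContinuousLinearMap.contDiff.comp hF
  have hfderivFc : ∀ z v, fderiv ℝ Fc z v = (starRingEnd ℂ) (fderiv ℝ F z v) := by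
    intro z v
    have h := ((Complex.conjCLE : ℂ ≃L[ℝ] ℂ).toContinuousLinearMap.hasFDerivAt.comp z
      ((hF.differentiable (by norm_cast) z).hasFDerivAt)).fderiv
    calc fderiv ℝ Fc z v
        = fderiv ℝ ((Complex.conjCLE : ℂ ≃L[ℝ] ℂ).toContinuousLinearMap ∘ F) z v := rfl
      _ = ((Complex.conjCLE : ℂ ≃L[ℝ] ℂ).toContinuousLinearMap.comp (fderiv ℝ F z)) v := by
          rw [h]
      _ = (starRingEnd ℂ) (fderiv ℝ F z v) := rfl
  have hconj1 : ∀ z, dZbar Fc z = (starRingEnd ℂ) (dZ F z) := by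
    intro z
    simp only [dZ, dZbar, hfderivFc, map_div₀, map_sub, map_mul, Complex.conj_I, map_ofNat]
    ring
  have hconj2 : ∀ z, dZ Fc z = (starRingEnd ℂ) (dZbar F z) := by
    intro z
    simp only [dZ, dZbar, hfderivFc, map_div₀, map_add, map_mul, Complex.conj_I, map_ofNat]
    ring
  -- the divergence fields
  set A : ℂ → ℂ := fun z => F z * dZbar Fc z with hAdef
  set B : ℂ → ℂ := fun z => F z * dZ Fc z with hBdef
  have hA : ContDiff ℝ ∞' A := hF.mul (contDiff_dZbar hFc)
  have hB : ContDiff ℝ ∞' B := hF.mul (contDiff_dZ hFc)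
  have hAsupp : HasCompactSupport A :=
    HasCompactSupport.intro hsupp fun z hz => by
      simp only [hAdef]; rw [hFtsup z hz, zero_mul]
  have hBsupp : HasCompactSupport B :=
    HasCompactSupport.intro hsupp fun z hz => by
      simp only [hBdef]; rw [hFtsup z hz, zero_mul]
  have hIA : ∫ z : ℂ, dZ A z = 0 := integral_dZ_eq_zero hA hAsupp
  have hIB : ∫ z : ℂ, dZbar B z = 0 := integral_dZbar_eq_zero hB hBsupp
  -- pointwise identity
  have hdiff : Differentiable ℝ F := hF.differentiable (by norm_cast)
  have hpt : ∀ z, dZ A z - dZbar B z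
      = ((‖dZ F z‖ ^ 2 : ℝ) : ℂ) - ((‖dZbar F z‖ ^ 2 : ℝ) : ℂ) := by
    intro z
    have e1 : dZ A z = dZ F z * dZbar Fc z + F z * dZ (dZbar Fc) z :=
      dZ_mul (hdiff z) (((contDiff_dZbar hFc).differentiable (by norm_cast)) z)
    have e2 : dZbar B z = dZbar F z * dZ Fc z + F z * dZbar (dZ Fc) z :=
      dZbar_mul (hdiff z) (((contDiff_dZ hFc).differentiable (by norm_cast)) z)
    have e3 : dZ (dZbar Fc) z = dZbar (dZ Fc) z := dZ_dZbar_comm hFc z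
    rw [e1, e2, e3, hconj1, hconj2]
    rw [Complex.mul_conj', Complex.mul_conj']
    push_cast
    ring
  -- integrability
  have hi1 : Integrable (fun z : ℂ => ‖dZ F z‖ ^ 2) := by
    apply Continuous.integrable_of_hasCompactSupport
    · exact ((contDiff_dZ hF).continuous.norm.pow 2)
    · exact HasCompactSupport.intro hFsupp fun z hz => by
        rw [dZ_eq_zero_of_not_mem_tsupport hz]; simp
  have hi2 : Integrable (fun z : ℂ => ‖dZbar F z‖ ^ 2) := by
    apply Continuous.integrable_of_hasCompactSupport
    · exact ((contDiff_dZbar hF).continuous.norm.pow 2)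
    · exact HasCompactSupport.intro hFsupp fun z hz => by
        rw [dZbar_eq_zero_of_not_mem_tsupport hz]; simp
  have hiA : Integrable (fun z : ℂ => dZ A z) := by
    apply Continuous.integrable_of_hasCompactSupport
    · exact (contDiff_dZ hA).continuous
    · exact HasCompactSupport.intro hAsupp fun z hz => dZ_eq_zero_of_not_mem_tsupport hz
  have hiB : Integrable (fun z : ℂ => dZbar B z) := by
    apply Continuous.integrable_of_hasCompactSupport
    · exact (contDiff_dZbar hB).continuous
    · exact HasCompactSupport.intro hBsupp fun z hz => dZbar_eq_zero_of_not_mem_tsupport hz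
  -- main identity over ℂ
  have hmain : ∫ z : ℂ, ‖dZ F z‖ ^ 2 = ∫ z : ℂ, ‖dZbar F z‖ ^ 2 := by
    have h0 : ∫ z : ℂ, (dZ A z - dZbar B z) = 0 := by
      rw [integral_sub hiA hiB, hIA, hIB, sub_zero]
    have h1 : ∫ z : ℂ, (((‖dZ F z‖ ^ 2 : ℝ) : ℂ) - ((‖dZbar F z‖ ^ 2 : ℝ) : ℂ)) = 0 := by
      rw [← h0]; exact integral_congr_ae (Filter.Eventually.of_forall fun z => (hpt z).symm)
    have h2 : ∫ z : ℂ, (((‖dZ F z‖ ^ 2 - ‖dZbar F z‖ ^ 2 : ℝ)) : ℂ) = 0 := by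
      rw [← h1]
      exact integral_congr_ae (Filter.Eventually.of_forall fun z => by push_cast; ring)
    have h3 : ∫ z : ℂ, (‖dZ F z‖ ^ 2 - ‖dZbar F z‖ ^ 2 : ℝ) = 0 := by
      have h5 := integral_ofReal (𝕜 := ℂ)
        (f := fun z : ℂ => ‖dZ F z‖ ^ 2 - ‖dZbar F z‖ ^ 2) (μ := volume)
      exact Complex.ofReal_eq_zero.mp (h5.symm.trans h2)
    rw [integral_sub hi1 hi2] at h3
    linarith
  -- assemble
  calc ∫ z in U, ‖Kop lam 0 F z‖ ^ 2 * (lam z) ^ 2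
      = ∫ z in U, ‖dZ F z‖ ^ 2 := setIntegral_congr_fun hU.measurableSet hK0
    _ = ∫ z : ℂ, ‖dZ F z‖ ^ 2 := by
        apply setIntegral_eq_integral_of_forall_compl_eq_zero
        intro z hz
        have : z ∉ tsupport F := fun h => hz (hsub (htsF h))
        rw [dZ_eq_zero_of_not_mem_tsupport this]; simp
    _ = ∫ z : ℂ, ‖dZbar F z‖ ^ 2 := hmain
    _ = ∫ z in U, ‖dZbar F z‖ ^ 2 := by
        symm
        apply setIntegral_eq_integral_of_forall_compl_eq_zero
        intro z hz
        have : z ∉ tsupport F := fun h => hz (hsub (htsF h))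
        rw [dZbar_eq_zero_of_not_mem_tsupport this]; simp
    _ = ∫ z in U, ‖Lop lam 0 F z‖ ^ 2 * (lam z) ^ 2 :=
        (setIntegral_congr_fun hU.measurableSet hL0).symm
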